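/- arXiv:2204.08416 — 3 statements merged into one kernel-verified Lean document; each statement's English description precedes it below -/
import Mathlib

section
/- Let G and H be simple graphs with δ(G) ≥ 2 and δ(H) ≥ 2. Then Cc(G × H) ≤ Cc(G) · Cc(H). -/
variable {α β : Type*}

/-- Tensor (categorical) product of simple graphs. -/
def tensorProdG (G : SimpleGraph α) (H : SimpleGraph β) : SimpleGraph (α × β) where
  Adj x y := G.Adj x.1 y.1 ∧ H.Adj x.2 y.2
  symm := ⟨fun _ _ h => ⟨h.1.symm, h.2.symm⟩⟩
  loopless := ⟨fun x h => G.loopless.irrefl x.1 h.1⟩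

instance (G : SimpleGraph α) (H : SimpleGraph β) [DecidableRel G.Adj] [DecidableRel H.Adj] :
    DecidableRel (tensorProdG G H).Adj := fun x y =>
      inferInstanceAs (Decidable (G.Adj x.1 y.1 ∧ H.Adj x.2 y.2))

/-- Number of triangles incident to `u`: edges of the induced neighborhood. -/
noncomputable def triCount (G : SimpleGraph α) [Fintype α] (u : α) : ℕ :=
  Nat.card (SimpleGraph.induce (G.neighborSet u) G).edgeSet

/-- Local clustering coefficient. -/
noncomputable def locCc (G : SimpleGraph α) [Fintype α] [DecidableRel G.Adj] (u : α) : ℝ :=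
  if 2 ≤ G.degree u then (triCount G u : ℝ) / ((G.degree u).choose 2) else 0

/-- Global clustering coefficient. -/
noncomputable def globCc (G : SimpleGraph α) [Fintype α] [DecidableRel G.Adj] : ℝ :=
  (∑ v, locCc G v) / (Fintype.card α)

/-- Minimum degree of the induced neighborhood of `u`. -/
noncomputable def nbrMinDeg (G : SimpleGraph α) [Fintype α] [DecidableRel G.Adj] (u : α) : ℕ :=
  (SimpleGraph.induce (G.neighborSet u) G).minDegree

/-- Average degree, as a real number. -/
noncomputable def avgDeg (G : SimpleGraph α) [Fintype α] [DecidableRel G.Adj] : ℝ :=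
  (∑ v, (G.degree v : ℝ)) / (Fintype.card α)

/-!
The neighbourhood of `(u, v)` in `G × H` is the product of the neighbourhoods of `u` and `v`,
and it induces the tensor product of the two induced neighbourhoods. Darts of a tensor product
are pairs of darts, so `t(u, v) = 2 t(u) t(v)`, while `deg (u, v) = deg u * deg v`. Since
`2 C(a, 2) C(b, 2) ≤ C(ab, 2)`, this gives `Cc_(u,v) ≤ Cc_u Cc_v` at every vertex, and averaging
over `V(G) × V(H)` gives the theorem.
-/

open SimpleGraph

theorem Nat.two_mul_choose_two_mul_choose_two_le (a b : ℕ) :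
    2 * (a.choose 2 * b.choose 2) ≤ (a * b).choose 2 := by
  suffices h : (2 * (a.choose 2 * b.choose 2) : ℚ) ≤ (a * b).choose 2 by exact_mod_cast h
  rw [Nat.cast_choose_two, Nat.cast_choose_two, Nat.cast_choose_two, Nat.cast_mul]
  -- the difference of the two sides is `a * b * (a + b - 2) / 2`
  rcases Nat.eq_zero_or_pos a with rfl | ha
  · simp
  rcases Nat.eq_zero_or_pos b with rfl | hb
  · simp
  have ha' : (1 : ℚ) ≤ a := by exact_mod_cast ha
  have hb' : (1 : ℚ) ≤ b := by exact_mod_cast hb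
  nlinarith [mul_nonneg (sub_nonneg.2 ha') (sub_nonneg.2 hb'), mul_le_mul ha' hb' zero_le_one
    (by linarith)]

theorem SimpleGraph.natCard_dart (G : SimpleGraph α) [Finite α] :
    Nat.card G.Dart = 2 * Nat.card G.edgeSet := by
  have := Fintype.ofFinite α
  classical
  rw [Nat.card_eq_fintype_card, Nat.card_eq_fintype_card, G.dart_card_eq_twice_card_edges,
    card_edgeSet]

section TensorProduct

variable (G : SimpleGraph α) (H : SimpleGraph β)

def tensorProdGDartEquiv : (tensorProdG G H).Dart ≃ G.Dart × H.Dart where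
  toFun d := (⟨(d.fst.1, d.snd.1), d.adj.1⟩, ⟨(d.fst.2, d.snd.2), d.adj.2⟩)
  invFun p := ⟨((p.1.fst, p.2.fst), (p.1.snd, p.2.snd)), p.1.adj, p.2.adj⟩
  left_inv _ := rfl
  right_inv _ := rfl

theorem natCard_edgeSet_tensorProdG [Finite α] [Finite β] :
    Nat.card (tensorProdG G H).edgeSet = 2 * (Nat.card G.edgeSet * Nat.card H.edgeSet) := by
  have h := (tensorProdG G H).natCard_dart
  rw [Nat.card_congr (tensorProdGDartEquiv G H), Nat.card_prod, G.natCard_dart,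
    H.natCard_dart] at h
  linarith

def induceNeighborSetTensorProdGIso (u : α) (v : β) :
    (tensorProdG G H).induce ((tensorProdG G H).neighborSet (u, v)) ≃g
      tensorProdG (G.induce (G.neighborSet u)) (H.induce (H.neighborSet v)) where
  toEquiv := Equiv.subtypeProdEquivProd
  map_rel_iff' := Iff.rfl

theorem triCount_tensorProdG [Fintype α] [Fintype β] (u : α) (v : β) :
    triCount (tensorProdG G H) (u, v) = 2 * (triCount G u * triCount H v) := by
  rw [triCount, Nat.card_congr (induceNeighborSetTensorProdGIso G H u v).mapEdgeSet,
    natCard_edgeSet_tensorProdG, triCount, triCount]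

variable [Fintype α] [Fintype β] [DecidableRel G.Adj] [DecidableRel H.Adj]

theorem neighborFinset_tensorProdG (u : α) (v : β) :
    (tensorProdG G H).neighborFinset (u, v) = G.neighborFinset u ×ˢ H.neighborFinset v := by
  ext
  simp only [mem_neighborFinset, Finset.mem_product]
  rfl

theorem degree_tensorProdG (u : α) (v : β) :
    (tensorProdG G H).degree (u, v) = G.degree u * H.degree v := by
  rw [← card_neighborFinset_eq_degree, neighborFinset_tensorProdG, Finset.card_product,
    card_neighborFinset_eq_degree, card_neighborFinset_eq_degree]

theorem locCc_tensorProdG_le {u : α} {v : β} (hu : 2 ≤ G.degree u) (hv : 2 ≤ H.degree v) :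
    locCc (tensorProdG G H) (u, v) ≤ locCc G u * locCc H v := by
  have huv : 2 ≤ G.degree u * H.degree v := by nlinarith
  have choose_two_pos {n : ℕ} (hn : 2 ≤ n) : (0 : ℝ) < n.choose 2 := by
    exact_mod_cast Nat.choose_pos hn
  rw [locCc, degree_tensorProdG, if_pos huv, locCc, if_pos hu, locCc, if_pos hv,
    triCount_tensorProdG, div_mul_div_comm, div_le_div_iff₀ (choose_two_pos huv)
      (mul_pos (choose_two_pos hu) (choose_two_pos hv))]
  have hchoose : (2 * ((G.degree u).choose 2 * (H.degree v).choose 2) : ℝ) ≤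
      (G.degree u * H.degree v).choose 2 := by
    exact_mod_cast Nat.two_mul_choose_two_mul_choose_two_le _ _
  push_cast
  calc _ = triCount G u * triCount H v *
        (2 * ((G.degree u).choose 2 * (H.degree v).choose 2) : ℝ) := by ring
    _ ≤ _ := by gcongr

end TensorProduct

variable [Fintype α] [Fintype β] (G : SimpleGraph α) (H : SimpleGraph β)
  [DecidableRel G.Adj] [DecidableRel H.Adj]

theorem tensor_globCc_le (hG : ∀ u : α, 2 ≤ G.degree u) (hH : ∀ v : β, 2 ≤ H.degree v) :
    globCc (tensorProdG G H) ≤ globCc G * globCc H := by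
  have hsum : ∑ x : α × β, locCc (tensorProdG G H) x ≤
      (∑ u, locCc G u) * (∑ v, locCc H v) := by
    rw [Fintype.sum_prod_type, Finset.sum_mul_sum]
    exact Finset.sum_le_sum fun u _ => Finset.sum_le_sum fun v _ =>
      locCc_tensorProdG_le G H (hG u) (hH v)
  rw [globCc, globCc, globCc, Fintype.card_prod, div_mul_div_comm, Nat.cast_mul]
  exact div_le_div_of_nonneg_right hsum (by positivity)
end

section
/- Let G and H be simple graphs with δ(G) ≥ 2 and δ(H) ≥ 2. Set σ_G = min_{u ∈ V(G)} δ(⟨N_G(u)⟩) and σ_H = min_{v ∈ V(H)} δ(⟨N_H(v)⟩), and let d̂_G and d̂_H be the average degrees of G and H. Then Cc(G × H) ≥ σ_G · σ_H / (d̂_G · d̂_H − 1). -/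
variable {α β : Type*}

/-!
The neighbourhood of `(u, v)` in `G × H` is `N(u) × N(v)`, and the graph it induces is the tensor
product of the graphs induced by `N(u)` and `N(v)`. Counting edges by the handshake lemma, twice the
number of triangles at `(u, v)` is the product of the corresponding quantities at `u` and `v`, each
of which is at least `deg · σ`. Hence the local clustering coefficient at a vertex of degree `d`
is at least `σ_G σ_H / (d - 1)`, and averaging, the harmonic–arithmetic mean inequality
(Sedrakyan's lemma) bounds the mean of `1 / (d - 1)` below by `1 / (d̂ - 1)`, where the average
degree of `G × H` is `d̂_G d̂_H`.
-/

open Finset SimpleGraph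

section Clustering

variable {γ : Type*} [Fintype γ] (K : SimpleGraph γ) [DecidableRel K.Adj]

lemma two_mul_card_edgeSet : 2 * Nat.card K.edgeSet = ∑ v, K.degree v := by
  classical
  rw [Nat.card_eq_fintype_card, ← edgeFinset_card, sum_degrees_eq_twice_card_edges]

lemma degree_mul_nbrMinDeg_le (v : γ) : K.degree v * nbrMinDeg K v ≤ 2 * triCount K v := by
  classical
  rw [triCount, two_mul_card_edgeSet, ← card_neighborSet_eq_degree, ← card_univ,
    ← smul_eq_mul, ← sum_const]
  exact sum_le_sum fun a _ => minDegree_le_degree _ a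

lemma div_degree_sub_one_le_locCc {v : γ} (hv : 2 ≤ K.degree v) {s : ℕ}
    (hs : K.degree v * s ≤ 2 * triCount K v) : (s : ℝ) / (K.degree v - 1) ≤ locCc K v := by
  have hd : (2 : ℝ) ≤ K.degree v := by exact_mod_cast hv
  have hs' : (K.degree v : ℝ) * s ≤ 2 * triCount K v := by exact_mod_cast hs
  rw [locCc, if_pos hv, Nat.cast_choose_two, div_le_div_iff₀ (by linarith) (by nlinarith)]
  nlinarith

theorem div_avgDeg_sub_one_le_globCc [Nonempty γ] (hK : ∀ v, 2 ≤ K.degree v) {s : ℕ}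
    (hs : ∀ v, K.degree v * s ≤ 2 * triCount K v) : (s : ℝ) / (avgDeg K - 1) ≤ globCc K := by
  have hn : (0 : ℝ) < Fintype.card γ := by exact_mod_cast Fintype.card_pos
  have hpos (v : γ) : 0 < (K.degree v : ℝ) - 1 := by
    linarith [show (2 : ℝ) ≤ K.degree v by exact_mod_cast hK v]
  have hsum : ∑ v, ((K.degree v : ℝ) - 1) = Fintype.card γ * (avgDeg K - 1) := by
    rw [sum_sub_distrib, avgDeg, sum_const, card_univ, nsmul_one]
    field_simp
  have hA : 0 < avgDeg K - 1 :=
    pos_of_mul_pos_right (hsum ▸ sum_pos (fun v _ => hpos v) univ_nonempty) hn.le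
  have harmonic : (Fintype.card γ : ℝ) ^ 2 / (Fintype.card γ * (avgDeg K - 1)) ≤
      ∑ v, 1 / ((K.degree v : ℝ) - 1) := by
    simpa [hsum] using sq_sum_div_le_sum_sq_div univ (fun _ => (1 : ℝ)) fun v _ => hpos v
  calc (s : ℝ) / (avgDeg K - 1)
        = s * ((Fintype.card γ : ℝ) ^ 2 / (Fintype.card γ * (avgDeg K - 1))) / Fintype.card γ := by
          field_simp
    _ ≤ s * (∑ v, 1 / ((K.degree v : ℝ) - 1)) / Fintype.card γ := by gcongr
    _ = (∑ v, s / ((K.degree v : ℝ) - 1)) / Fintype.card γ := by simp only [mul_sum, mul_one_div]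
    _ ≤ globCc K := by
      rw [globCc]
      gcongr with v
      exact div_degree_sub_one_le_locCc K (hK v) (hs v)

end Clustering

section Tensor

variable (G : SimpleGraph α) (H : SimpleGraph β)

def tensorProdGInduceNeighborSetIso (u : α) (v : β) :
    (tensorProdG G H).induce ((tensorProdG G H).neighborSet (u, v)) ≃g
      tensorProdG (G.induce (G.neighborSet u)) (H.induce (H.neighborSet v)) where
  toEquiv := Equiv.Set.prod (G.neighborSet u) (H.neighborSet v)
  map_rel_iff' := Iff.rfl

variable [Fintype α] [Fintype β] [DecidableRel G.Adj] [DecidableRel H.Adj]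

lemma tensorProdG_degree (p : α × β) :
    (tensorProdG G H).degree p = G.degree p.1 * H.degree p.2 := by
  classical
  simp only [← card_neighborSet_eq_degree, ← Nat.card_eq_fintype_card]
  exact (Nat.card_congr (Equiv.Set.prod _ _)).trans (Nat.card_prod _ _)

lemma avgDeg_tensorProdG : avgDeg (tensorProdG G H) = avgDeg G * avgDeg H := by
  simp only [avgDeg, tensorProdG_degree, Fintype.sum_prod_type, Nat.cast_mul, Fintype.card_prod]
  rw [div_mul_div_comm, sum_mul_sum]

lemma two_mul_triCount_tensorProdG (u : α) (v : β) :
    2 * triCount (tensorProdG G H) (u, v) = (2 * triCount G u) * (2 * triCount H v) := by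
  classical
  simp only [triCount, Nat.card_congr (tensorProdGInduceNeighborSetIso G H u v).mapEdgeSet,
    two_mul_card_edgeSet, tensorProdG_degree, sum_mul_sum, Fintype.sum_prod_type]

end Tensor

theorem tensor_globCc_lower_bound [Fintype α] [Fintype β] [Nonempty α] [Nonempty β]
    (G : SimpleGraph α) (H : SimpleGraph β) [DecidableRel G.Adj] [DecidableRel H.Adj]
    (hG : ∀ u : α, 2 ≤ G.degree u) (hH : ∀ v : β, 2 ≤ H.degree v) :
    globCc (tensorProdG G H) ≥
      ((Finset.univ.inf' Finset.univ_nonempty (nbrMinDeg G) : ℕ) : ℝ) *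
        ((Finset.univ.inf' Finset.univ_nonempty (nbrMinDeg H) : ℕ) : ℝ) /
          (avgDeg G * avgDeg H - 1) := by
  set σG := univ.inf' univ_nonempty (nbrMinDeg G)
  set σH := univ.inf' univ_nonempty (nbrMinDeg H)
  have hK (p : α × β) : 2 ≤ (tensorProdG G H).degree p := by
    rw [tensorProdG_degree]; nlinarith [hG p.1, hH p.2]
  rw [ge_iff_le, ← avgDeg_tensorProdG, ← Nat.cast_mul]
  refine div_avgDeg_sub_one_le_globCc _ hK fun ⟨u, v⟩ => ?_
  rw [tensorProdG_degree, two_mul_triCount_tensorProdG]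
  calc G.degree u * H.degree v * (σG * σH) = (G.degree u * σG) * (H.degree v * σH) := by ring
    _ ≤ (2 * triCount G u) * (2 * triCount H v) := Nat.mul_le_mul
      ((Nat.mul_le_mul_left _ (inf'_le _ (mem_univ u))).trans (degree_mul_nbrMinDeg_le G u))
      ((Nat.mul_le_mul_left _ (inf'_le _ (mem_univ v))).trans (degree_mul_nbrMinDeg_le H v))
end

section
/- Let G be a d_G-regular graph of order n₁ and H a d_H-regular graph of order n₂, with d_G ≥ 2 and d_H ≥ 2. Then Cc(G × H) = f · Cc(G) · Cc(H), where f = (d_G − 1)(d_H − 1)/(d_G · d_H − 1). -/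
variable {α β : Type*}

/-!
The triangles of `G × H` through `(u, v)` are the edges of the neighbourhood of `(u, v)`, which
is the tensor product of the neighbourhoods of `u` and `v`. A tensor product has twice the
product of the edge counts (edges `aa'` and `bb'` give `(a,b)(a',b')` and `(a,b')(a',b)`), so
`t(u, v) = 2 t(u) t(v)`, while `G × H` is `dG dH`-regular. Summing, everything reduces to the
identity `2 / C(dG dH, 2) = f / (C(dG, 2) C(dH, 2))`.
-/

namespace tensorProdG

@[simp]
lemma adj_iff {G : SimpleGraph α} {H : SimpleGraph β} {x y : α × β} :
    (tensorProdG G H).Adj x y ↔ G.Adj x.1 y.1 ∧ H.Adj x.2 y.2 := Iff.rfl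

section Finite

variable (G : SimpleGraph α) (H : SimpleGraph β)

lemma neighborFinset_eq [Fintype α] [Fintype β] [DecidableRel G.Adj] [DecidableRel H.Adj]
    (a : α) (b : β) :
    (tensorProdG G H).neighborFinset (a, b) = G.neighborFinset a ×ˢ H.neighborFinset b := by
  ext
  simp

lemma degree_eq [Fintype α] [Fintype β] [DecidableRel G.Adj] [DecidableRel H.Adj]
    (a : α) (b : β) :
    (tensorProdG G H).degree (a, b) = G.degree a * H.degree b := by
  rw [← SimpleGraph.card_neighborFinset_eq_degree, neighborFinset_eq, Finset.card_product]
  rfl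

lemma card_edgeSet [Finite α] [Finite β] : Nat.card (tensorProdG G H).edgeSet =
    2 * (Nat.card G.edgeSet * Nat.card H.edgeSet) := by
  classical
  have := Fintype.ofFinite α
  have := Fintype.ofFinite β
  simp only [Nat.card_eq_fintype_card, SimpleGraph.card_edgeSet]
  have handshake : 2 * (tensorProdG G H).edgeFinset.card =
      2 * (2 * (G.edgeFinset.card * H.edgeFinset.card)) := by
    calc 2 * (tensorProdG G H).edgeFinset.card
        = ∑ x, (tensorProdG G H).degree x := (SimpleGraph.sum_degrees_eq_twice_card_edges _).symm
      _ = (∑ a, G.degree a) * ∑ b, H.degree b := by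
          simp only [Finset.sum_mul_sum, Fintype.sum_prod_type, degree_eq]
      _ = 2 * (2 * (G.edgeFinset.card * H.edgeFinset.card)) := by
          rw [SimpleGraph.sum_degrees_eq_twice_card_edges,
            SimpleGraph.sum_degrees_eq_twice_card_edges]
          ring
  omega

def induceNeighborSetIso (u : α) (v : β) :
    (tensorProdG G H).induce ((tensorProdG G H).neighborSet (u, v)) ≃g
      tensorProdG (G.induce (G.neighborSet u)) (H.induce (H.neighborSet v)) where
  toFun x := (⟨x.1.1, x.2.1⟩, ⟨x.1.2, x.2.2⟩)
  invFun p := ⟨(p.1.1, p.2.1), ⟨p.1.2, p.2.2⟩⟩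
  left_inv _ := rfl
  right_inv _ := rfl
  map_rel_iff' := Iff.rfl

variable [Fintype α] [Fintype β]

lemma triCount_eq (u : α) (v : β) :
    triCount (tensorProdG G H) (u, v) = 2 * (triCount G u * triCount H v) := by
  rw [triCount, Nat.card_congr (induceNeighborSetIso G H u v).mapEdgeSet, card_edgeSet]
  rfl

lemma sum_triCount : ∑ x, triCount (tensorProdG G H) x =
    2 * ((∑ u, triCount G u) * ∑ v, triCount H v) := by
  rw [Finset.sum_mul_sum, Finset.mul_sum, Fintype.sum_prod_type]
  simp only [triCount_eq, Finset.mul_sum]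

end Finite

end tensorProdG

lemma SimpleGraph.IsRegularOfDegree.tensorProdG [Fintype α] [Fintype β]
    {G : SimpleGraph α} {H : SimpleGraph β} [DecidableRel G.Adj] [DecidableRel H.Adj]
    {dG dH : ℕ} (hG : G.IsRegularOfDegree dG) (hH : H.IsRegularOfDegree dH) :
    (tensorProdG G H).IsRegularOfDegree (dG * dH) := by
  rintro ⟨a, b⟩
  rw [tensorProdG.degree_eq, hG a, hH b]

section ClusteringCoefficient

variable [Fintype α] (G : SimpleGraph α) [DecidableRel G.Adj]

/-- Below degree `2` both branches of `locCc` are `0`, since `x / 0 = 0`. -/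
lemma locCc_eq_div (u : α) : locCc G u = triCount G u / (G.degree u).choose 2 := by
  unfold locCc
  split_ifs with h
  · rfl
  · rw [Nat.choose_eq_zero_of_lt (by omega), Nat.cast_zero, div_zero]

lemma globCc_eq_of_isRegularOfDegree {d : ℕ} (hG : G.IsRegularOfDegree d) :
    globCc G = (∑ u, (triCount G u : ℝ)) / d.choose 2 / Fintype.card α := by
  simp only [globCc, locCc_eq_div, hG.degree_eq, Finset.sum_div]

end ClusteringCoefficient

lemma two_div_cast_choose_two_mul {m n : ℕ} (hm : 2 ≤ m) (hn : 2 ≤ n) :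
    (2 : ℝ) / (m * n).choose 2 =
      ((m : ℝ) - 1) * ((n : ℝ) - 1) / ((m : ℝ) * n - 1) / (m.choose 2 * n.choose 2) := by
  have hm' : (2 : ℝ) ≤ m := by exact_mod_cast hm
  have hn' : (2 : ℝ) ≤ n := by exact_mod_cast hn
  have hm1 : (m : ℝ) - 1 ≠ 0 := by linarith
  have hn1 : (n : ℝ) - 1 ≠ 0 := by linarith
  have hmn1 : (m : ℝ) * n - 1 ≠ 0 := by nlinarith
  simp only [Nat.cast_choose_two, Nat.cast_mul]
  field_simp

variable [Fintype α] [Fintype β] (G : SimpleGraph α) (H : SimpleGraph β)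
  [DecidableRel G.Adj] [DecidableRel H.Adj]

theorem tensor_globCc_regular (dG dH : ℕ) (hG : G.IsRegularOfDegree dG)
    (hH : H.IsRegularOfDegree dH) (hdG : 2 ≤ dG) (hdH : 2 ≤ dH) :
    globCc (tensorProdG G H) =
      ((dG : ℝ) - 1) * ((dH : ℝ) - 1) / ((dG : ℝ) * (dH : ℝ) - 1) *
        globCc G * globCc H := by
  have sum_triCount := congrArg (Nat.cast : ℕ → ℝ) (tensorProdG.sum_triCount G H)
  push_cast at sum_triCount
  set tG := ∑ u, (triCount G u : ℝ)
  set tH := ∑ v, (triCount H v : ℝ)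
  rw [globCc_eq_of_isRegularOfDegree _ (hG.tensorProdG hH), sum_triCount,
    globCc_eq_of_isRegularOfDegree G hG, globCc_eq_of_isRegularOfDegree H hH,
    Fintype.card_prod, Nat.cast_mul]
  calc 2 * (tG * tH) / ((dG * dH).choose 2 : ℕ) / (Fintype.card α * Fintype.card β)
      = 2 / ((dG * dH).choose 2 : ℕ) * (tG / Fintype.card α) * (tH / Fintype.card β) := by
        ring
    _ = _ := by
        rw [two_div_cast_choose_two_mul hdG hdH]
        ring
end
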